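/- arXiv:2012.04216 — 3 statements merged into one kernel-verified Lean document; each statement's English description precedes it below -/
import Mathlib

section
/- Let (Ω, 𝒜, μ) be a probability space and let Group : Ω → G, Pay : Ω → P, Labor : Ω → L be measurable random variables with G, P, L finite (discrete) types. Assume the joint distribution of (Pay, Labor) is strictly positive, i.e., μ(Pay = p, Labor = l) > 0 for every p ∈ P and l ∈ L. Assume further that different groups have different joint distributions of pay and labor, i.e., Group is NOT independent of the pair (Pay, Labor). Then it is impossible for the following two conditions to hold simultaneously: (i) Group is conditionally independent of Pay given Labor, and (ii) Group is conditionally independent of Labor given Pay. -/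
open MeasureTheory

lemma ennreal_mul_right_cancel' {x y c : ENNReal} (hc0 : c ≠ 0) (hct : c ≠ ⊤)
    (h : x * c = y * c) : x = y := by
  have h2 : x * c * c⁻¹ = y * c * c⁻¹ := by rw [h]
  rwa [mul_assoc, mul_assoc, ENNReal.mul_inv_cancel hc0 hct, mul_one, mul_one] at h2

lemma partition_sum {Ω β : Type*} [MeasurableSpace Ω] [Fintype β]
    [MeasurableSpace β] [MeasurableSingletonClass β]
    (μ : Measure Ω) (f : Ω → β) (hf : Measurable f) (s : Set Ω) (hs : MeasurableSet s) :
    μ s = ∑ b : β, μ (s ∩ f ⁻¹' {b}) := by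
  have h : s = ⋃ b : β, s ∩ f ⁻¹' {b} := by ext ω; simp
  conv_lhs => rw [h]
  rw [measure_iUnion, tsum_fintype]
  · intro a b hab
    refine Set.disjoint_left.2 ?_
    rintro ω ⟨_, ha⟩ ⟨_, hb⟩
    exact hab (ha.symm.trans hb)
  · exact fun b => hs.inter (hf (measurableSet_singleton b))


/-- Discrete conditional independence: for all values `a`, `b`, `c` with `μ(C = c) > 0`,
`μ(A = a, B = b | C = c) = μ(A = a | C = c) * μ(B = b | C = c)`, where conditional
probability given `{C = c}` is `μ(· ∩ {C = c}) / μ {C = c}`. -/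
def DiscreteCondIndep {Ω α β γ : Type*} [MeasurableSpace Ω] (μ : Measure Ω)
    (A : Ω → α) (B : Ω → β) (C : Ω → γ) : Prop :=
  ∀ (a : α) (b : β) (c : γ), 0 < μ {ω | C ω = c} →
    μ {ω | A ω = a ∧ B ω = b ∧ C ω = c} / μ {ω | C ω = c} =
      (μ {ω | A ω = a ∧ C ω = c} / μ {ω | C ω = c}) *
        (μ {ω | B ω = b ∧ C ω = c} / μ {ω | C ω = c})

/-- Discrete (unconditional) independence:
`μ(A = a, B = b) = μ(A = a) * μ(B = b)` for all values `a`, `b`. -/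
def DiscreteIndep {Ω α β : Type*} [MeasurableSpace Ω] (μ : Measure Ω)
    (A : Ω → α) (B : Ω → β) : Prop :=
  ∀ (a : α) (b : β),
    μ {ω | A ω = a ∧ B ω = b} = μ {ω | A ω = a} * μ {ω | B ω = b}

/-- Fair Pay Impossibility (first claim): if the joint distribution of `(Pay, Labor)`
is strictly positive and `Group` is not independent of the pair `(Pay, Labor)`, then
`Group ⟂ Pay | Labor` (equal opportunity) and `Group ⟂ Labor | Pay` (sufficiency)
cannot both hold. -/
theorem fair_pay_impossibility
    {Ω G P L : Type*} [MeasurableSpace Ω]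
    [MeasurableSpace G] [MeasurableSpace P] [MeasurableSpace L]
    [Fintype G] [Fintype P] [Fintype L]
    [MeasurableSingletonClass G] [MeasurableSingletonClass P] [MeasurableSingletonClass L]
    (μ : Measure Ω) [IsProbabilityMeasure μ]
    (Group : Ω → G) (Pay : Ω → P) (Labor : Ω → L)
    (hG : Measurable Group) (hP : Measurable Pay) (hL : Measurable Labor)
    (hpos : ∀ (p : P) (l : L), 0 < μ {ω | Pay ω = p ∧ Labor ω = l})
    (hdiff : ¬ DiscreteIndep μ Group (fun ω => (Pay ω, Labor ω))) :
    ¬ (DiscreteCondIndep μ Group Pay Labor ∧ DiscreteCondIndep μ Group Labor Pay) := by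
  rintro ⟨h1, h2⟩
  apply hdiff
  -- Ω is nonempty
  have hΩ : (Set.univ : Set Ω).Nonempty := by
    by_contra h
    rw [Set.not_nonempty_iff_eq_empty] at h
    have h1 : μ (Set.univ : Set Ω) = 1 := measure_univ
    rw [h, measure_empty] at h1
    exact zero_ne_one h1
  obtain ⟨ω0, -⟩ := hΩ
  set p0 : P := Pay ω0
  set l0 : L := Labor ω0
  set S : G → P → L → Set Ω := fun g p l => {ω | Group ω = g ∧ Pay ω = p ∧ Labor ω = l} with hS
  set b : P → L → ENNReal := fun p l => μ {ω | Pay ω = p ∧ Labor ω = l} with hb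
  have hb0 : ∀ p l, b p l ≠ 0 := fun p l => (hpos p l).ne'
  have hbtop : ∀ p l, b p l ≠ ⊤ := fun p l => measure_ne_top μ _
  have hDl0 : ∀ l : L, 0 < μ {ω | Labor ω = l} := by
    intro l
    refine lt_of_lt_of_le (hpos p0 l) (measure_mono ?_)
    intro ω hω; exact hω.2
  have hDp0 : ∀ p : P, 0 < μ {ω | Pay ω = p} := by
    intro p
    refine lt_of_lt_of_le (hpos p l0) (measure_mono ?_)
    intro ω hω; exact hω.1
  have stepA : ∀ g p l, μ (S g p l) =
      (μ {ω | Group ω = g ∧ Labor ω = l} / μ {ω | Labor ω = l}) * b p l := by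
    intro g p l
    have hDl := hDl0 l
    have hDlt : μ {ω | Labor ω = l} ≠ ⊤ := measure_ne_top μ _
    have h := h1 g p l hDl
    calc μ (S g p l) = μ (S g p l) / μ {ω | Labor ω = l} * μ {ω | Labor ω = l} :=
          (ENNReal.div_mul_cancel hDl.ne' hDlt).symm
      _ = (μ {ω | Group ω = g ∧ Labor ω = l} / μ {ω | Labor ω = l} *
            (μ {ω | Pay ω = p ∧ Labor ω = l} / μ {ω | Labor ω = l})) * μ {ω | Labor ω = l} := by
          rw [← h]
      _ = μ {ω | Group ω = g ∧ Labor ω = l} / μ {ω | Labor ω = l} *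
            (μ {ω | Pay ω = p ∧ Labor ω = l} / μ {ω | Labor ω = l} * μ {ω | Labor ω = l}) := by
          ring
      _ = _ := by rw [ENNReal.div_mul_cancel hDl.ne' hDlt]
  have stepB : ∀ g p l, μ (S g p l) =
      (μ {ω | Group ω = g ∧ Pay ω = p} / μ {ω | Pay ω = p}) * b p l := by
    intro g p l
    have hDp := hDp0 p
    have hDpt : μ {ω | Pay ω = p} ≠ ⊤ := measure_ne_top μ _
    have h := h2 g l p hDp
    have e1 : {ω | Group ω = g ∧ Labor ω = l ∧ Pay ω = p} = S g p l := by
      ext ω; simp only [hS, Set.mem_setOf_eq]; tauto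
    have e2 : {ω | Labor ω = l ∧ Pay ω = p} = {ω | Pay ω = p ∧ Labor ω = l} := by
      ext ω; exact and_comm
    rw [e1, e2] at h
    calc μ (S g p l) = μ (S g p l) / μ {ω | Pay ω = p} * μ {ω | Pay ω = p} :=
          (ENNReal.div_mul_cancel hDp.ne' hDpt).symm
      _ = (μ {ω | Group ω = g ∧ Pay ω = p} / μ {ω | Pay ω = p} *
            (μ {ω | Pay ω = p ∧ Labor ω = l} / μ {ω | Pay ω = p})) * μ {ω | Pay ω = p} := by
          rw [← h]
      _ = μ {ω | Group ω = g ∧ Pay ω = p} / μ {ω | Pay ω = p} *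
            (μ {ω | Pay ω = p ∧ Labor ω = l} / μ {ω | Pay ω = p} * μ {ω | Pay ω = p}) := by
          ring
      _ = _ := by rw [ENNReal.div_mul_cancel hDp.ne' hDpt]
  set q : G → L → ENNReal :=
    fun g l => μ {ω | Group ω = g ∧ Labor ω = l} / μ {ω | Labor ω = l} with hq
  have hqconst : ∀ g l l', q g l = q g l' := by
    intro g l l'
    have key : ∀ l'', q g l'' = μ {ω | Group ω = g ∧ Pay ω = p0} / μ {ω | Pay ω = p0} := by
      intro l''
      have heq := (stepA g p0 l'').symm.trans (stepB g p0 l'')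
      exact ennreal_mul_right_cancel' (hb0 p0 l'') (hbtop p0 l'') heq
    rw [key l, key l']
  have main : ∀ g p l, μ (S g p l) = q g l0 * b p l := by
    intro g p l
    rw [stepA g p l, show (μ {ω | Group ω = g ∧ Labor ω = l} / μ {ω | Labor ω = l}) = q g l
      from rfl, hqconst g l l0]
  have hpair : Measurable (fun ω => (Pay ω, Labor ω)) := hP.prodMk hL
  have hbsum : ∑ pl : P × L, b pl.1 pl.2 = 1 := by
    have h := partition_sum μ (fun ω => (Pay ω, Labor ω)) hpair Set.univ MeasurableSet.univ
    rw [measure_univ] at h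
    refine Eq.trans ?_ h.symm
    refine Finset.sum_congr rfl fun pl _ => congrArg μ ?_
    ext ω
    simp [hb, Prod.ext_iff]
  have hGsum : ∀ g : G, μ {ω | Group ω = g} = q g l0 := by
    intro g
    have hms : MeasurableSet {ω | Group ω = g} := hG (measurableSet_singleton g)
    have h := partition_sum μ (fun ω => (Pay ω, Labor ω)) hpair {ω | Group ω = g} hms
    have e : ∀ pl : P × L,
        {ω | Group ω = g} ∩ (fun ω => (Pay ω, Labor ω)) ⁻¹' {pl} = S g pl.1 pl.2 := by
      intro pl; ext ω; simp [hS, Prod.ext_iff]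
    calc μ {ω | Group ω = g} = ∑ pl : P × L, μ (S g pl.1 pl.2) := by
          rw [h]; exact Finset.sum_congr rfl fun pl _ => by rw [e pl]
      _ = ∑ pl : P × L, q g l0 * b pl.1 pl.2 :=
          Finset.sum_congr rfl fun pl _ => main g pl.1 pl.2
      _ = q g l0 * ∑ pl : P × L, b pl.1 pl.2 := by rw [Finset.mul_sum]
      _ = q g l0 := by rw [hbsum, mul_one]
  rintro g ⟨p, l⟩
  have e1 : {ω | Group ω = g ∧ (Pay ω, Labor ω) = (p, l)} = S g p l := by
    ext ω; simp [hS, Prod.ext_iff]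
  have e2 : {ω | (Pay ω, Labor ω) = (p, l)} = {ω | Pay ω = p ∧ Labor ω = l} := by
    ext ω; simp [Prod.ext_iff]
  rw [e1, e2, hGsum g]
  exact main g p l
end

section
/- Let (Ω, 𝒜, μ) be a probability space, let Outputs : Ω → O and Labor : Ω → L be measurable random variables with O and L finite (discrete) types, and let Pay = f ∘ Outputs for some function f : O → P into a finite type P (pay is calculated as a function of the measured outputs of work). If Pay is conditionally independent of Outputs given Labor, then Pay is conditionally degenerate given Labor: for every l ∈ L with μ(Labor = l) > 0, there exists p ∈ P with μ(Pay = p | Labor = l) = 1. Consequently, if there is a value l with μ(Labor = l) > 0 on which Pay is not almost-surely constant, then it is impossible for both (i) Pay conditionally independent of Labor given Outputs and (ii) Pay conditionally independent of Outputs given Labor to hold (note (i) holds automatically since Pay is a function of Outputs). -/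
open MeasureTheory

/-! Fix a value `l` of `Labor` of positive probability. Some cell `{Outputs = o, Labor = l}` has
positive probability, and on it `Pay = f o` holds identically. Conditional independence of `Pay`
and `Outputs` given `Labor = l`, evaluated at `(f o, o)`, therefore reads
`μ(Outputs = o | l) = μ(Pay = f o | l) · μ(Outputs = o | l)`, and cancelling the finite nonzero
factor gives `μ(Pay = f o | l) = 1`. -/

theorem exists_measure_setOf_eq_and_pos {Ω α : Type*} [MeasurableSpace Ω] [Countable α]
    {μ : Measure Ω} (X : Ω → α) {s : Set Ω} (hs : 0 < μ s) :
    ∃ a, 0 < μ {ω | X ω = a ∧ ω ∈ s} := by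
  have hcover : ⋃ a, {ω | X ω = a ∧ ω ∈ s} = s := by
    ext ω
    simp
  exact exists_measure_pos_of_not_measure_iUnion_null (hcover.symm ▸ hs.ne')

theorem DiscreteCondIndep.exists_condProb_eq_one_of_eq_comp {Ω α β γ : Type*}
    [MeasurableSpace Ω] [Countable β] {μ : Measure Ω} [IsFiniteMeasure μ]
    {A : Ω → α} {B : Ω → β} {C : Ω → γ} {f : β → α} (h : DiscreteCondIndep μ A B C)
    (hA : ∀ ω, A ω = f (B ω)) {c : γ} (hc : 0 < μ {ω | C ω = c}) :
    ∃ a, μ {ω | A ω = a ∧ C ω = c} / μ {ω | C ω = c} = 1 := by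
  obtain ⟨b, hb⟩ := exists_measure_setOf_eq_and_pos B hc
  refine ⟨f b, ?_⟩
  have hcell : {ω | A ω = f b ∧ B ω = b ∧ C ω = c} = {ω | B ω = b ∧ C ω = c} := by
    ext ω
    simp only [Set.mem_ofPred_eq, hA]
    exact ⟨And.right, fun hbc => ⟨congrArg f hbc.1, hbc⟩⟩
  have hfactor := h (f b) b c hc
  rw [hcell] at hfactor
  have hcell_pos : μ {ω | B ω = b ∧ C ω = c} / μ {ω | C ω = c} ≠ 0 :=
    (ENNReal.div_pos hb.ne' (measure_ne_top μ _)).ne'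
  have hcell_fin : μ {ω | B ω = b ∧ C ω = c} / μ {ω | C ω = c} ≠ ⊤ :=
    ENNReal.div_ne_top (measure_ne_top μ _) hc.ne'
  exact (ENNReal.mul_eq_right hcell_pos hcell_fin).1 hfactor.symm

theorem fair_pay_impossibility_outputs_general
    {Ω O L P : Type*} [MeasurableSpace Ω]
    [Fintype O]
    (μ : Measure Ω) [IsProbabilityMeasure μ]
    (Outputs : Ω → O) (Labor : Ω → L)
    (f : O → P) (Pay : Ω → P) (hPay : Pay = fun ω => f (Outputs ω)) :
    (DiscreteCondIndep μ Pay Outputs Labor →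
      ∀ l : L, 0 < μ {ω | Labor ω = l} →
        ∃ p : P, μ {ω | Pay ω = p ∧ Labor ω = l} / μ {ω | Labor ω = l} = 1) ∧
    ((∃ l : L, 0 < μ {ω | Labor ω = l} ∧
        ¬ ∃ p : P, μ {ω | Pay ω = p ∧ Labor ω = l} / μ {ω | Labor ω = l} = 1) →
      ¬ (DiscreteCondIndep μ Pay Labor Outputs ∧
          DiscreteCondIndep μ Pay Outputs Labor)) := by
  have degenerate : DiscreteCondIndep μ Pay Outputs Labor →
      ∀ l : L, 0 < μ {ω | Labor ω = l} →
        ∃ p : P, μ {ω | Pay ω = p ∧ Labor ω = l} / μ {ω | Labor ω = l} = 1 :=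
    fun hCI _ hl => hCI.exists_condProb_eq_one_of_eq_comp (congrFun hPay) hl
  refine ⟨degenerate, ?_⟩
  rintro ⟨l, hl, hnot⟩ ⟨-, hCI⟩
  exact hnot (degenerate hCI l hl)

/-- Fair Pay Impossibility (second claim). Pay is a function of measured outputs,
`Pay = f ∘ Outputs`. If `Pay ⟂ Outputs | Labor`, then `Pay` is conditionally
degenerate given `Labor`; consequently, if `Pay` is not almost-surely constant
conditionally on some value of `Labor` of positive probability, then
`Pay ⟂ Labor | Outputs` and `Pay ⟂ Outputs | Labor` cannot both hold. -/
theorem fair_pay_impossibility_outputs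
    {Ω O L P : Type*} [MeasurableSpace Ω]
    [MeasurableSpace O] [MeasurableSpace L]
    [Fintype O] [Fintype L] [Fintype P]
    [MeasurableSingletonClass O] [MeasurableSingletonClass L]
    (μ : Measure Ω) [IsProbabilityMeasure μ]
    (Outputs : Ω → O) (Labor : Ω → L)
    (hO : Measurable Outputs) (hL : Measurable Labor)
    (f : O → P) (Pay : Ω → P) (hPay : Pay = fun ω => f (Outputs ω)) :
    (DiscreteCondIndep μ Pay Outputs Labor →
      ∀ l : L, 0 < μ {ω | Labor ω = l} →
        ∃ p : P, μ {ω | Pay ω = p ∧ Labor ω = l} / μ {ω | Labor ω = l} = 1) ∧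
    ((∃ l : L, 0 < μ {ω | Labor ω = l} ∧
        ¬ ∃ p : P, μ {ω | Pay ω = p ∧ Labor ω = l} / μ {ω | Labor ω = l} = 1) →
      ¬ (DiscreteCondIndep μ Pay Labor Outputs ∧
          DiscreteCondIndep μ Pay Outputs Labor)) :=
  fair_pay_impossibility_outputs_general μ Outputs Labor f Pay hPay
end

section
/- Let (Ω, 𝒜, μ) be a probability space and let Y, Ŷ : Ω → {0, 1} be binary random variables and A : Ω → {a, b} a binary group attribute. For each group g ∈ {a, b} with μ(A = g) > 0, define the within-group base rate p_g = μ(Y = 1 | A = g), false positive rate FPR_g = μ(Ŷ = 1 | Y = 0, A = g), false negative rate FNR_g = μ(Ŷ = 0 | Y = 1, A = g), and positive predictive value PPV_g = μ(Y = 1 | Ŷ = 1, A = g), assuming all the conditioning events have positive probability. Suppose 0 < p_a < 1 and 0 < p_b < 1, the two groups have equal error rates FPR_a = FPR_b and FNR_a = FNR_b, equal positive predictive values PPV_a = PPV_b, and the predictor is imperfect and nondegenerate in the sense that FPR_a > 0 and FNR_a < 1. Then the two groups have equal base rates: p_a = p_b. -/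
open MeasureTheory

/-! Within each group, Bayes' rule expresses the positive predictive value through the base
rate `p` and the error rates: `PPV * ((1 - FNR) * p + FPR * (1 - p)) = (1 - FNR) * p`.
With the same `PPV`, `FPR` and `FNR` in both groups, cross-multiplying the two instances leaves
`(1 - FNR) * FPR * (p_a - p_b) = 0`, and both factors in front are nonzero. -/

section

variable {Ω : Type*} [MeasurableSpace Ω] (μ : Measure Ω) [IsFiniteMeasure μ]

theorem mul_measureReal_eq_of_eq_div {s t : Set Ω} {r : ℝ} (hr : r = μ.real s / μ.real t)
    (h : s ⊆ t) : r * μ.real t = μ.real s :=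
  hr ▸ div_mul_cancel_of_imp fun ht => measureReal_mono_null h ht

theorem measureReal_true_add_false {f : Ω → Bool} (hf : Measurable f) (P : Ω → Prop) :
    μ.real {ω | f ω = true ∧ P ω} + μ.real {ω | f ω = false ∧ P ω} =
      μ.real {ω | P ω} := by
  convert measureReal_inter_add_sdiff (μ := μ) (s := {ω | P ω})
    (hf (measurableSet_singleton true)) using 3 <;> ext ω <;> simp [and_comm]

theorem ppv_mul_eq {Y Yhat : Ω → Bool} (hY : Measurable Y) (hYhat : Measurable Yhat)
    {G : Set Ω} (hG : μ G ≠ 0) {p fpr fnr ppv : ℝ}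
    (hp : p = μ.real {ω | Y ω = true ∧ ω ∈ G} / μ.real G)
    (hfpr : fpr = μ.real {ω | Yhat ω = true ∧ (Y ω = false ∧ ω ∈ G)} /
      μ.real {ω | Y ω = false ∧ ω ∈ G})
    (hfnr : fnr = μ.real {ω | Yhat ω = false ∧ (Y ω = true ∧ ω ∈ G)} /
      μ.real {ω | Y ω = true ∧ ω ∈ G})
    (hppv : ppv = μ.real {ω | Y ω = true ∧ (Yhat ω = true ∧ ω ∈ G)} /
      μ.real {ω | Yhat ω = true ∧ ω ∈ G}) :
    ppv * ((1 - fnr) * p + fpr * (1 - p)) = (1 - fnr) * p := by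
  have hswap (b : Bool) : {ω | Y ω = b ∧ (Yhat ω = true ∧ ω ∈ G)} =
      {ω | Yhat ω = true ∧ (Y ω = b ∧ ω ∈ G)} := Set.ext fun _ => and_left_comm
  have hgroup_split := measureReal_true_add_false μ hY (· ∈ G)
  have hpos_split := measureReal_true_add_false μ hYhat fun ω => Y ω = true ∧ ω ∈ G
  have hpred_split := measureReal_true_add_false μ hY fun ω => Yhat ω = true ∧ ω ∈ G
  simp only [hswap] at hpred_split hppv
  rw [Set.ofPred_mem_eq] at hgroup_split
  have hfn := mul_measureReal_eq_of_eq_div μ hfnr fun _ h => h.2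
  have hfp := mul_measureReal_eq_of_eq_div μ hfpr fun _ h => h.2
  have htp := mul_measureReal_eq_of_eq_div μ hppv fun _ h => ⟨h.1, h.2.2⟩
  have hy1 := mul_measureReal_eq_of_eq_div μ hp fun _ h => h.2
  have hcount : ppv * ((1 - fnr) * μ.real {ω | Y ω = true ∧ ω ∈ G}
      + fpr * μ.real {ω | Y ω = false ∧ ω ∈ G}) =
      (1 - fnr) * μ.real {ω | Y ω = true ∧ ω ∈ G} := by
    linear_combination htp + ppv * hpred_split + (1 - ppv) * (hpos_split + hfn) + ppv * hfp
  apply mul_right_cancel₀ (show μ.real G ≠ 0 by rwa [Ne, measureReal_eq_zero_iff])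
  linear_combination
    hcount + (ppv * (1 - fnr) - (1 - fnr) - ppv * fpr) * hy1 - ppv * fpr * hgroup_split

end

theorem eq_of_ppv_mul_eq {c r ppv p q : ℝ} (hc : c ≠ 0) (hr : r ≠ 0)
    (hp : ppv * (c * p + r * (1 - p)) = c * p) (hq : ppv * (c * q + r * (1 - q)) = c * q) :
    p = q := by
  have h : c * r * (p - q) = 0 := by
    linear_combination (c * p + r * (1 - p)) * hq - (c * q + r * (1 - q)) * hp
  simpa [hc, hr, sub_eq_zero] using h

theorem equal_rates_and_ppv_imp_equal_base_rates_general
    {Ω : Type*} [MeasurableSpace Ω] (μ : Measure Ω) [IsProbabilityMeasure μ]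
    (Y Yhat A : Ω → Bool)
    (hY : Measurable Y) (hYhat : Measurable Yhat)
    (p FPR FNR PPV : Bool → ℝ)
    -- within-group base rate: p_g = μ(Y = 1 | A = g)
    (hp : ∀ g, p g = (μ {ω | Y ω = true ∧ A ω = g}).toReal /
                       (μ {ω | A ω = g}).toReal)
    -- within-group false positive rate: FPR_g = μ(Ŷ = 1 | Y = 0, A = g)
    (hFPR : ∀ g, FPR g = (μ {ω | Yhat ω = true ∧ (Y ω = false ∧ A ω = g)}).toReal /
                           (μ {ω | Y ω = false ∧ A ω = g}).toReal)
    -- within-group false negative rate: FNR_g = μ(Ŷ = 0 | Y = 1, A = g)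
    (hFNR : ∀ g, FNR g = (μ {ω | Yhat ω = false ∧ (Y ω = true ∧ A ω = g)}).toReal /
                           (μ {ω | Y ω = true ∧ A ω = g}).toReal)
    -- within-group positive predictive value: PPV_g = μ(Y = 1 | Ŷ = 1, A = g)
    (hPPV : ∀ g, PPV g = (μ {ω | Y ω = true ∧ (Yhat ω = true ∧ A ω = g)}).toReal /
                           (μ {ω | Yhat ω = true ∧ A ω = g}).toReal)
    -- all conditioning events have positive probability
    (hApos : ∀ g, 0 < μ {ω | A ω = g})
    -- equal error rates and equal PPVs across the two groups
    (hFPReq : FPR false = FPR true)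
    (hFNReq : FNR false = FNR true)
    (hPPVeq : PPV false = PPV true)
    -- imperfect, nondegenerate predictor
    (hFPRpos : 0 < FPR false) (hFNRlt : FNR false < 1) :
    p false = p true := by
  have hBayes (g : Bool) :=
    ppv_mul_eq μ hY hYhat (hApos g).ne' (hp g) (hFPR g) (hFNR g) (hPPV g)
  have htrue := hBayes true
  rw [← hFPReq, ← hFNReq, ← hPPVeq] at htrue
  exact eq_of_ppv_mul_eq (sub_ne_zero.2 hFNRlt.ne') hFPRpos.ne' (hBayes false) htrue

/-- Contrapositive form of the group-fairness impossibility result (Kleinberg et al.,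
Chouldechova): if two groups (here `false` and `true`, the values of the binary group
attribute `A`) have equal false positive rates, equal false negative rates and equal
positive predictive values, and the predictor is imperfect and nondegenerate
(`FPR > 0`, `FNR < 1`), then the two groups have equal base rates. -/
theorem equal_rates_and_ppv_imp_equal_base_rates
    {Ω : Type*} [MeasurableSpace Ω] (μ : Measure Ω) [IsProbabilityMeasure μ]
    (Y Yhat A : Ω → Bool)
    (hY : Measurable Y) (hYhat : Measurable Yhat) (hA : Measurable A)
    (p FPR FNR PPV : Bool → ℝ)
    -- within-group base rate: p_g = μ(Y = 1 | A = g)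
    (hp : ∀ g, p g = (μ {ω | Y ω = true ∧ A ω = g}).toReal /
                       (μ {ω | A ω = g}).toReal)
    -- within-group false positive rate: FPR_g = μ(Ŷ = 1 | Y = 0, A = g)
    (hFPR : ∀ g, FPR g = (μ {ω | Yhat ω = true ∧ (Y ω = false ∧ A ω = g)}).toReal /
                           (μ {ω | Y ω = false ∧ A ω = g}).toReal)
    -- within-group false negative rate: FNR_g = μ(Ŷ = 0 | Y = 1, A = g)
    (hFNR : ∀ g, FNR g = (μ {ω | Yhat ω = false ∧ (Y ω = true ∧ A ω = g)}).toReal /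
                           (μ {ω | Y ω = true ∧ A ω = g}).toReal)
    -- within-group positive predictive value: PPV_g = μ(Y = 1 | Ŷ = 1, A = g)
    (hPPV : ∀ g, PPV g = (μ {ω | Y ω = true ∧ (Yhat ω = true ∧ A ω = g)}).toReal /
                           (μ {ω | Yhat ω = true ∧ A ω = g}).toReal)
    -- all conditioning events have positive probability
    (hApos : ∀ g, 0 < μ {ω | A ω = g})
    (hY0pos : ∀ g, 0 < μ {ω | Y ω = false ∧ A ω = g})
    (hY1pos : ∀ g, 0 < μ {ω | Y ω = true ∧ A ω = g})
    (hYhat1pos : ∀ g, 0 < μ {ω | Yhat ω = true ∧ A ω = g})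
    -- nondegenerate base rates
    (hpa0 : 0 < p false) (hpa1 : p false < 1)
    (hpb0 : 0 < p true) (hpb1 : p true < 1)
    -- equal error rates and equal PPVs across the two groups
    (hFPReq : FPR false = FPR true)
    (hFNReq : FNR false = FNR true)
    (hPPVeq : PPV false = PPV true)
    -- imperfect, nondegenerate predictor
    (hFPRpos : 0 < FPR false) (hFNRlt : FNR false < 1) :
    p false = p true :=
  equal_rates_and_ppv_imp_equal_base_rates_general μ Y Yhat A hY hYhat p FPR FNR PPV hp hFPR hFNR
    hPPV hApos hFPReq hFNReq hPPVeq hFPRpos hFNRlt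
end
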